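/- Let μ be a finite Borel measure on ℝ with total mass λ := μ(ℝ). Define the convolution powers μ^{*0} := δ₀ (Dirac mass at 0), μ^{*k} := μ^{*(k−1)} ∗ μ, and for t ≥ 0 the probability measure ν_t := e^{−λt} Σ_{k=0}^{∞} (t^k/k!) μ^{*k}. Define the operator A on bounded measurable g : ℝ → ℝ by A g(x) := ∫ (g(x+u) − g(x)) μ(du), with iterates A⁰g = g, A^{k+1}g = A(A^k g). Then for every bounded measurable g, every n ≥ 0, and every t > 0: ∫ g dν_t = g(0) + Σ_{k=1}^{n} (t^k/k!) (A^k g)(0) + (t^{n+1}/n!) ∫₀¹ (1−α)^n [ ∫ (A^{n+1} g) dν_{αt} ] dα. -/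

import Mathlib

open MeasureTheory intervalIntegral

noncomputable section

/-- Convolution powers of a measure: `μ^{*0} = δ₀`, `μ^{*k} = μ^{*(k-1)} ∗ μ`. -/
def measConvPow (μ : Measure ℝ) : ℕ → Measure ℝ
  | 0 => Measure.dirac 0
  | k + 1 => (measConvPow μ k).conv μ

/-- The time-`t` marginal law `ν_t = e^{-λt} Σ_{k≥0} (t^k/k!) μ^{*k}` of a compound
Poisson process with jump intensity measure `μ`, where `λ = μ(ℝ)`. -/
def cpLaw (μ : Measure ℝ) (t : ℝ) : Measure ℝ :=
  Measure.sum fun k : ℕ =>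
    ENNReal.ofReal (Real.exp (-(μ Set.univ).toReal * t) * t ^ k / (Nat.factorial k)) •
      measConvPow μ k

/-- The compound Poisson generator `A g(x) = ∫ (g(x+u) - g(x)) μ(du)`. -/
def cpGen (μ : Measure ℝ) (g : ℝ → ℝ) : ℝ → ℝ :=
  fun x => ∫ u, (g (x + u) - g x) ∂μ

end


/-!
Write `λ = μ(ℝ)` and `aₖ(g) = ∫ g dμ^{*k}`, so that `∫ g dν_s = e^{-λs} ∑ₖ aₖ(g) sᵏ/k!`.
For bounded `g` the coefficients grow at most geometrically, so this is an entire function of `s`,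
and `aₖ(A g) = aₖ₊₁(g) - λ aₖ(g)` turns termwise differentiation into Kolmogorov's equation
`d/ds ∫ g dν_s = ∫ A g dν_s`. Hence the `k`-th derivative of `s ↦ ∫ g dν_s` is `s ↦ ∫ Aᵏ g dν_s`,
which equals `Aᵏ g(0)` at `s = 0` because `ν_0 = δ₀`, and the expansion is Taylor's formula with
integral remainder on `[0, t]`, rescaled to `[0, 1]`.
-/

open Finset
open scoped Nat

section ExpSeries

variable {a : ℕ → ℝ} {C r : ℝ}

theorem abs_le_abs_mul_abs_pow (ha : ∀ k, |a k| ≤ C * r ^ k) (k : ℕ) :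
    |a k| ≤ |C| * |r| ^ k :=
  (ha k).trans <| by rw [← abs_pow, ← abs_mul]; exact le_abs_self _

theorem summable_mul_pow_div_factorial (ha : ∀ k, |a k| ≤ C * r ^ k) (s : ℝ) :
    Summable fun k => a k * s ^ k / (k ! : ℝ) := by
  refine .of_norm_bounded ((Real.summable_pow_div_factorial (|r| * |s|)).mul_left |C|)
    fun k => ?_
  rw [Real.norm_eq_abs, abs_div, abs_mul, abs_pow, Nat.abs_cast, mul_pow, ← mul_div_assoc,
    ← mul_assoc]
  gcongr
  exact abs_le_abs_mul_abs_pow ha k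

theorem hasDerivAt_tsum_mul_pow_div_factorial (ha : ∀ k, |a k| ≤ C * r ^ k) (s : ℝ) :
    HasDerivAt (fun s => ∑' k, a k * s ^ k / (k ! : ℝ))
      (∑' k, a (k + 1) * s ^ k / (k ! : ℝ)) s := by
  -- with the constant term split off, each summand differentiates to a term of the target series
  have hseries : (fun s => ∑' k, a k * s ^ k / (k ! : ℝ)) =
      fun s => a 0 + ∑' k, a (k + 1) * s ^ (k + 1) / ((k + 1) ! : ℝ) := by
    ext s
    rw [(summable_mul_pow_div_factorial ha s).tsum_eq_zero_add]
    simp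
  have hterm (k : ℕ) (y : ℝ) :
      HasDerivAt (fun y => a (k + 1) * y ^ (k + 1) / ((k + 1) ! : ℝ))
        (a (k + 1) * y ^ k / (k ! : ℝ)) y := by
    refine (((hasDerivAt_pow (k + 1) y).const_mul (a (k + 1))).div_const _).congr_deriv ?_
    rw [Nat.factorial_succ]
    push_cast
    field_simp
  set R := |s| + 1
  have hbound (k : ℕ) (y : ℝ) (hy : y ∈ Metric.ball 0 R) :
      ‖a (k + 1) * y ^ k / (k ! : ℝ)‖ ≤ |C| * |r| * ((|r| * R) ^ k / (k ! : ℝ)) := by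
    rw [mem_ball_zero_iff, Real.norm_eq_abs] at hy
    rw [Real.norm_eq_abs, abs_div, abs_mul, abs_pow, Nat.abs_cast, mul_pow, ← mul_div_assoc]
    calc |a (k + 1)| * |y| ^ k / (k ! : ℝ) ≤ |C| * |r| ^ (k + 1) * R ^ k / (k ! : ℝ) := by
          gcongr
          exact abs_le_abs_mul_abs_pow ha (k + 1)
      _ = _ := by ring
  rw [hseries]
  refine (hasDerivAt_tsum_of_isPreconnected
    ((Real.summable_pow_div_factorial _).mul_left _) Metric.isOpen_ball
    (convex_ball 0 R).isPreconnected (fun k y _ => hterm k y) hbound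
    (Metric.mem_ball_self (by positivity)) (by simp) ?_).const_add (a 0)
  rw [mem_ball_zero_iff, Real.norm_eq_abs]
  exact lt_add_one _

noncomputable def poissonSeries (c : ℝ) (a : ℕ → ℝ) (s : ℝ) : ℝ :=
  Real.exp (-c * s) * ∑' k, a k * s ^ k / (k ! : ℝ)

theorem poissonSeries_zero (c : ℝ) (a : ℕ → ℝ) : poissonSeries c a 0 = a 0 := by
  rw [poissonSeries, tsum_eq_single 0 fun k hk => by simp [hk]]
  simp

theorem hasDerivAt_poissonSeries (c : ℝ) (ha : ∀ k, |a k| ≤ C * r ^ k) (s : ℝ) :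
    HasDerivAt (poissonSeries c a) (poissonSeries c (fun k => a (k + 1) - c * a k) s) s := by
  have hshift : ∀ k, |a (k + 1)| ≤ (C * r) * r ^ k := fun k =>
    (ha (k + 1)).trans_eq (by ring)
  have hexp : HasDerivAt (fun s => Real.exp (-c * s)) (Real.exp (-c * s) * -c) s := by
    simpa using ((hasDerivAt_id s).const_mul (-c)).exp
  have hsplit : ∑' k, (a (k + 1) - c * a k) * s ^ k / (k ! : ℝ) =
      ∑' k, a (k + 1) * s ^ k / (k ! : ℝ) - c * ∑' k, a k * s ^ k / (k ! : ℝ) := by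
    rw [← tsum_mul_left, ← (summable_mul_pow_div_factorial hshift s).tsum_sub
      ((summable_mul_pow_div_factorial ha s).mul_left c)]
    exact tsum_congr fun k => by ring
  refine (hexp.fun_mul (hasDerivAt_tsum_mul_pow_div_factorial ha s)).congr_deriv ?_
  rw [poissonSeries, hsplit]
  ring

end ExpSeries

theorem iteratedDeriv_eq_of_hasDerivAt {f : ℕ → ℝ → ℝ}
    (hf : ∀ k x, HasDerivAt (f k) (f (k + 1) x) x) (k : ℕ) : iteratedDeriv k (f 0) = f k := by
  induction k with
  | zero => exact iteratedDeriv_zero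
  | succ k ih => rw [iteratedDeriv_succ, ih]; exact funext fun x => (hf k x).deriv

theorem taylor_integral_remainder_of_hasDerivAt {f : ℕ → ℝ → ℝ}
    (hf : ∀ k x, HasDerivAt (f k) (f (k + 1) x) x) (n : ℕ) (t : ℝ) :
    f 0 t = ∑ k ∈ range (n + 1), t ^ k / k ! * f k 0 +
      t ^ (n + 1) / n ! * ∫ α in (0 : ℝ)..1, (1 - α) ^ n * f (n + 1) (α * t) := by
  rcases eq_or_ne t 0 with rfl | ht
  · simp [sum_range_succ']
  have hderiv := iteratedDeriv_eq_of_hasDerivAt hf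
  have hsmooth : ContDiff ℝ (n + 1 : ℕ) (f 0) :=
    contDiff_of_differentiable_iteratedDeriv fun m _ => by
      rw [hderiv]; exact fun x => (hf m x).differentiableAt
  have hwithin : ∀ k ≤ n + 1, ∀ x ∈ Set.uIcc 0 t,
      iteratedDerivWithin k (f 0) (Set.uIcc 0 t) x = f k x := fun k hk x hx => by
    rw [iteratedDerivWithin_eq_iteratedDeriv (uniqueDiffOn_uIcc ht.symm)
      (hsmooth.contDiffAt.of_le (by exact_mod_cast hk)) hx, hderiv]
  have htaylor := taylor_integral_remainder (x₀ := 0) (x := t) hsmooth.contDiffOn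
  rw [taylor_within_apply, sub_eq_iff_eq_add'] at htaylor
  rw [htaylor]
  congr 1
  · refine sum_congr rfl fun k hk => ?_
    rw [hwithin k (mem_range.mp hk).le 0 Set.left_mem_uIcc, smul_eq_mul, sub_zero]
    ring
  · rw [intervalIntegral.integral_congr fun x hx => by
      rw [hwithin (n + 1) le_rfl x hx, smul_eq_mul]]
    have hsubst := intervalIntegral.smul_integral_comp_mul_right (a := 0) (b := 1)
      (fun x => (t - x) ^ n / n ! * f (n + 1) x) t
    rw [zero_mul, one_mul] at hsubst
    rw [← hsubst, smul_eq_mul, ← intervalIntegral.integral_const_mul,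
      ← intervalIntegral.integral_const_mul]
    refine intervalIntegral.integral_congr fun α _ => ?_
    rw [show t - α * t = (1 - α) * t by ring, mul_pow]
    ring

theorem MeasureTheory.Measure.conv_apply_univ {M : Type*} [AddMonoid M] [MeasurableSpace M]
    [MeasurableAdd₂ M]
    (ν ρ : Measure M) [SFinite ρ] : (ν.conv ρ) Set.univ = ν Set.univ * ρ Set.univ := by
  rw [Measure.conv, Measure.map_apply (by fun_prop) MeasurableSet.univ, Set.preimage_univ,
    ← Set.univ_prod_univ, Measure.prod_prod]

section ConvolutionPowers

variable {μ : Measure ℝ} [IsFiniteMeasure μ]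

instance isFiniteMeasure_measConvPow (k : ℕ) : IsFiniteMeasure (measConvPow μ k) := by
  induction k with
  | zero => rw [measConvPow]; infer_instance
  | succ k ih => rw [measConvPow]; infer_instance

theorem measConvPow_apply_univ (k : ℕ) : measConvPow μ k Set.univ = μ Set.univ ^ k := by
  induction k with
  | zero => simp [measConvPow]
  | succ k ih => rw [measConvPow, Measure.conv_apply_univ, ih, pow_succ]

theorem abs_integral_measConvPow_le {g : ℝ → ℝ} {C : ℝ} (hC : ∀ x, |g x| ≤ C) (k : ℕ) :
    |∫ x, g x ∂measConvPow μ k| ≤ C * (μ Set.univ).toReal ^ k := by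
  simpa [measureReal_def, measConvPow_apply_univ, ENNReal.toReal_pow] using
    norm_integral_le_of_norm_le_const (μ := measConvPow μ k) (f := g) (.of_forall hC)

end ConvolutionPowers

section Generator

variable {μ : Measure ℝ} [IsFiniteMeasure μ] {g : ℝ → ℝ} {C : ℝ}

theorem measurable_cpGen (hg : Measurable g) : Measurable (cpGen μ g) :=
  (((hg.comp measurable_add).sub (hg.comp measurable_fst)).stronglyMeasurable
    |>.integral_prod_right' (ν := μ)).measurable

theorem abs_cpGen_le (hC : ∀ x, |g x| ≤ C) (x : ℝ) :
    |cpGen μ g x| ≤ 2 * (μ Set.univ).toReal * C := by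
  have hdiff (u : ℝ) : ‖g (x + u) - g x‖ ≤ 2 * C := by
    rw [Real.norm_eq_abs, two_mul]
    exact (abs_sub _ _).trans (add_le_add (hC _) (hC _))
  have hint := norm_integral_le_of_norm_le_const (μ := μ) (.of_forall hdiff)
  rw [Real.norm_eq_abs, measureReal_def] at hint
  exact hint.trans_eq (by ring)

theorem measurable_cpGen_iterate (hg : Measurable g) (j : ℕ) : Measurable ((cpGen μ)^[j] g) := by
  induction j with
  | zero => exact hg
  | succ j ih => rw [Function.iterate_succ_apply']; exact measurable_cpGen ih

theorem abs_cpGen_iterate_le (hC : ∀ x, |g x| ≤ C) (j : ℕ) (x : ℝ) :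
    |(cpGen μ)^[j] g x| ≤ (2 * (μ Set.univ).toReal) ^ j * C := by
  induction j generalizing x with
  | zero => simpa using hC x
  | succ j ih =>
    rw [Function.iterate_succ_apply', pow_succ', mul_assoc]
    exact abs_cpGen_le ih x

theorem cpGen_apply (hg : Measurable g) (hC : ∀ x, |g x| ≤ C) (x : ℝ) :
    cpGen μ g x = ∫ u, g (x + u) ∂μ - (μ Set.univ).toReal * g x := by
  have hint : Integrable (fun u => g (x + u)) μ :=
    .of_bound (hg.comp (measurable_const_add x)).aestronglyMeasurable C (.of_forall fun u => hC _)
  rw [cpGen, integral_sub hint (integrable_const _), MeasureTheory.integral_const, smul_eq_mul,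
    measureReal_def]

theorem integral_measConvPow_cpGen (hg : Measurable g) (hC : ∀ x, |g x| ≤ C) (k : ℕ) :
    ∫ x, cpGen μ g x ∂measConvPow μ k =
      ∫ x, g x ∂measConvPow μ (k + 1) - (μ Set.univ).toReal * ∫ x, g x ∂measConvPow μ k := by
  have hint (ν : Measure ℝ) [IsFiniteMeasure ν] : Integrable g ν :=
    .of_bound hg.aestronglyMeasurable C (.of_forall hC)
  have hshift : Integrable (fun x => ∫ u, g (x + u) ∂μ) (measConvPow μ k) :=
    (Integrable.of_bound (μ := (measConvPow μ k).prod μ)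
      (hg.comp measurable_add).aestronglyMeasurable C (.of_forall fun p => hC _)).integral_prod_left
  rw [integral_congr_ae (.of_forall (cpGen_apply hg hC)), integral_sub hshift
    ((hint _).const_mul _), MeasureTheory.integral_const_mul, measConvPow,
    integral_conv (hint _)]

end Generator

section CompoundPoissonLaw

variable {μ : Measure ℝ} {g : ℝ → ℝ} {C s : ℝ}

/-- The series form of `s ↦ ∫ g d(cpLaw μ s)` (see `integral_cpLaw`). Unlike `cpLaw μ s`, whose
weights are clipped at `0` by `ENNReal.ofReal` when `s < 0`, it is smooth on all of `ℝ`. -/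
noncomputable def cpMean (μ : Measure ℝ) (g : ℝ → ℝ) : ℝ → ℝ :=
  poissonSeries (μ Set.univ).toReal fun k => ∫ x, g x ∂measConvPow μ k

theorem cpMean_zero : cpMean μ g 0 = g 0 := by
  simp [cpMean, poissonSeries_zero, measConvPow]

variable [IsFiniteMeasure μ]

theorem hasDerivAt_cpMean (hg : Measurable g) (hC : ∀ x, |g x| ≤ C) (s : ℝ) :
    HasDerivAt (cpMean μ g) (cpMean μ (cpGen μ g) s) s := by
  rw [cpMean, cpMean, funext (integral_measConvPow_cpGen hg hC)]
  exact hasDerivAt_poissonSeries _ (abs_integral_measConvPow_le hC) s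

theorem isFiniteMeasure_cpLaw (hs : 0 ≤ s) : IsFiniteMeasure (cpLaw μ s) := by
  have hmass (k : ℕ) :
      (ENNReal.ofReal (Real.exp (-(μ Set.univ).toReal * s) * s ^ k / (k ! : ℝ)) •
        measConvPow μ k) Set.univ =
      ENNReal.ofReal (Real.exp (-(μ Set.univ).toReal * s) * s ^ k / (k ! : ℝ) *
        (μ Set.univ).toReal ^ k) := by
    rw [Measure.smul_apply, smul_eq_mul, measConvPow_apply_univ, ENNReal.ofReal_mul
      (by positivity), ENNReal.ofReal_pow ENNReal.toReal_nonneg,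
      ENNReal.ofReal_toReal (measure_ne_top μ _)]
  have hsum : Summable fun k : ℕ =>
      Real.exp (-(μ Set.univ).toReal * s) * s ^ k / (k ! : ℝ) * (μ Set.univ).toReal ^ k :=
    ((Real.summable_pow_div_factorial (s * (μ Set.univ).toReal)).mul_left
      (Real.exp (-(μ Set.univ).toReal * s))).congr fun k => by rw [mul_pow]; ring
  constructor
  rw [cpLaw, Measure.sum_apply _ MeasurableSet.univ, tsum_congr hmass,
    ← ENNReal.ofReal_tsum_of_nonneg (fun k => by positivity) hsum]
  exact ENNReal.ofReal_lt_top

theorem integral_cpLaw (hg : Measurable g) (hC : ∀ x, |g x| ≤ C) (hs : 0 ≤ s) :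
    ∫ x, g x ∂cpLaw μ s = cpMean μ g s := by
  have := isFiniteMeasure_cpLaw (μ := μ) hs
  have hint : Integrable g (cpLaw μ s) := .of_bound hg.aestronglyMeasurable C (.of_forall hC)
  rw [cpLaw] at hint ⊢
  rw [integral_sum_measure hint, cpMean, poissonSeries, ← tsum_mul_left]
  refine tsum_congr fun k => ?_
  rw [MeasureTheory.integral_smul_measure, ENNReal.toReal_ofReal (by positivity), smul_eq_mul]
  ring

end CompoundPoissonLaw

/-- Iterated Dynkin expansion for a compound Poisson process: for every bounded
measurable `g`, every `n ≥ 0` and every `t > 0`,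
`∫ g dν_t = g(0) + Σ_{k=1}^n (t^k/k!) A^k g(0)
  + (t^{n+1}/n!) ∫₀¹ (1-α)^n ∫ A^{n+1} g dν_{αt} dα`. -/
theorem iterated_dynkin_compound_poisson
    (μ : Measure ℝ) [IsFiniteMeasure μ]
    (g : ℝ → ℝ) (hgm : Measurable g) (hgb : ∃ C : ℝ, ∀ x, |g x| ≤ C)
    (n : ℕ) (t : ℝ) (ht : 0 < t) :
    ∫ x, g x ∂(cpLaw μ t) =
      g 0 + ∑ k ∈ Finset.Icc 1 n, t ^ k / (Nat.factorial k) * (cpGen μ)^[k] g 0 +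
        t ^ (n + 1) / (Nat.factorial n) *
          ∫ α in (0 : ℝ)..1, (1 - α) ^ n * ∫ x, (cpGen μ)^[n + 1] g x ∂(cpLaw μ (α * t)) := by
  obtain ⟨C, hC⟩ := hgb
  have hderiv (j : ℕ) (s : ℝ) :
      HasDerivAt (cpMean μ ((cpGen μ)^[j] g)) (cpMean μ ((cpGen μ)^[j + 1] g) s) s := by
    rw [Function.iterate_succ_apply']
    exact hasDerivAt_cpMean (measurable_cpGen_iterate hgm j) (abs_cpGen_iterate_le hC j) s
  have hremainder : ∀ α ∈ Set.uIcc (0 : ℝ) 1,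
      (1 - α) ^ n * cpMean μ ((cpGen μ)^[n + 1] g) (α * t) =
        (1 - α) ^ n * ∫ x, (cpGen μ)^[n + 1] g x ∂(cpLaw μ (α * t)) := fun α hα => by
    rw [Set.uIcc_of_le zero_le_one] at hα
    rw [integral_cpLaw (measurable_cpGen_iterate hgm _) (abs_cpGen_iterate_le hC _)
      (mul_nonneg hα.1 ht.le)]
  rw [integral_cpLaw hgm hC ht.le, ← intervalIntegral.integral_congr hremainder]
  refine (taylor_integral_remainder_of_hasDerivAt hderiv n t).trans ?_
  rw [range_eq_Ico, sum_eq_sum_Ico_succ_bot (by omega), zero_add, Ico_add_one_right_eq_Icc]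
  simp only [cpMean_zero, pow_zero, Nat.factorial_zero, Nat.cast_one, div_one, one_mul,
    Function.iterate_zero_apply]
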